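/- arXiv:1903.04790 — 5 statements merged into one kernel-verified Lean document; each statement's English description precedes it below -/
import Mathlib

section
/- The map π : ℝ^d → ℝ^m, π(x) = (p₁(x), …, p_m(x)), is a proper map: the preimage under π of every compact subset of ℝ^m is compact. -/
/-!
The squared norm `∑ xᵢ²` is invariant under the orthogonal group, hence a polynomial `Q` in
the generators: `‖x‖² ≤ ∑ xᵢ² = Q (π x)`. On the preimage of a compact `K` the continuous `Q`
is bounded, so that preimage is a closed and bounded subset of `ℝ^d`.
-/

open MvPolynomial Matrix

def matOf {d : ℕ} (G : Subgroup (Matrix.orthogonalGroup (Fin d) ℝ)) (g : G) :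
    Matrix (Fin d) (Fin d) ℝ :=
  ((g : Matrix.orthogonalGroup (Fin d) ℝ) : Matrix (Fin d) (Fin d) ℝ)

theorem MvPolynomial.eval_aeval {σ τ R : Type*} [CommSemiring R] (p : σ → MvPolynomial τ R)
    (Q : MvPolynomial σ R) (x : τ → R) :
    eval x (aeval p Q) = eval (fun i => eval x (p i)) Q :=
  comp_aeval_apply p (aeval x) Q

theorem MvPolynomial.eval_sum_X_sq {σ R : Type*} [Fintype σ] [CommSemiring R] (x : σ → R) :
    eval x (∑ i, X i ^ 2) = x ⬝ᵥ x := by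
  simp [dotProduct, sq]

theorem Matrix.dotProduct_mulVec_self_of_transpose_mul_self {n R : Type*} [Fintype n]
    [DecidableEq n] [CommRing R] {A : Matrix n n R} (hA : Aᵀ * A = 1) (x : n → R) :
    A *ᵥ x ⬝ᵥ A *ᵥ x = x ⬝ᵥ x := by
  rw [dotProduct_mulVec, ← vecMul_transpose, vecMul_vecMul, hA, vecMul_one]

theorem norm_sq_le_dotProduct_self {ι : Type*} [Fintype ι] (x : ι → ℝ) :
    ‖x‖ ^ 2 ≤ x ⬝ᵥ x := by
  have hsum : 0 ≤ x ⬝ᵥ x := Finset.sum_nonneg fun i _ => mul_self_nonneg (x i)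
  refine (Real.le_sqrt (norm_nonneg x) hsum).mp ?_
  refine (pi_norm_le_iff_of_nonneg (Real.sqrt_nonneg _)).mpr fun i => Real.abs_le_sqrt ?_
  rw [sq]
  exact Finset.single_le_sum (f := fun j => x j * x j) (fun j _ => mul_self_nonneg (x j))
    (Finset.mem_univ i)

theorem isCompact_preimage_of_norm_sq_le {E F : Type*} [SeminormedAddCommGroup E] [ProperSpace E]
    [TopologicalSpace F] [T2Space F] {f : E → F} (hf : Continuous f) {q : F → ℝ}
    (hq : Continuous q) (hfq : ∀ x, ‖x‖ ^ 2 ≤ q (f x)) {K : Set F} (hK : IsCompact K) :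
    IsCompact (f ⁻¹' K) := by
  obtain ⟨C, hC⟩ := (hK.image hq).bddAbove
  have hball : f ⁻¹' K ⊆ Metric.closedBall 0 √C := fun x hx => by
    rw [mem_closedBall_zero_iff]
    exact Real.le_sqrt_of_sq_le ((hfq x).trans (hC ⟨f x, hx, rfl⟩))
  exact (isCompact_closedBall 0 √C).of_isClosed_subset (hK.isClosed.preimage hf) hball

theorem stmt0_general {d m : ℕ}
    (G : Subgroup (Matrix.orthogonalGroup (Fin d) ℝ))
    (p : Fin m → MvPolynomial (Fin d) ℝ)
    (hgen : ∀ f : MvPolynomial (Fin d) ℝ,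
      (∀ (g : G) (x : Fin d → ℝ), eval ((matOf G g).mulVec x) f = eval x f) →
        f ∈ Algebra.adjoin ℝ (Set.range p))
    (π : (Fin d → ℝ) → (Fin m → ℝ))
    (hπ : ∀ (x : Fin d → ℝ) (i : Fin m), π x i = eval x (p i)) :
    ∀ K : Set (Fin m → ℝ), IsCompact K → IsCompact (π ⁻¹' K) := by
  intro K hK
  have hnormSq : ∑ i, X i ^ 2 ∈ Algebra.adjoin ℝ (Set.range p) := hgen _ fun g x => by
    rw [eval_sum_X_sq, eval_sum_X_sq]
    exact dotProduct_mulVec_self_of_transpose_mul_self ((mem_orthogonalGroup_iff' _ _).mp g.1.2) x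
  rw [Algebra.adjoin_range_eq_range_aeval] at hnormSq
  obtain ⟨Q, hQ : aeval p Q = ∑ i, X i ^ 2⟩ := hnormSq
  obtain rfl : π = fun x i => eval x (p i) := funext₂ hπ
  refine isCompact_preimage_of_norm_sq_le (continuous_pi fun i => (p i).continuous_eval)
    Q.continuous_eval (fun x => ?_) hK
  calc ‖x‖ ^ 2 ≤ x ⬝ᵥ x := norm_sq_le_dotProduct_self x
    _ = eval (fun i => eval x (p i)) Q := by rw [← eval_aeval, hQ, eval_sum_X_sq]

/-- The geometric quotient map `π = (p₁, …, p_m) : ℝ^d → ℝ^m` associated to a generating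
family of `G`-invariant polynomials is a proper map: the preimage of every compact set
is compact. -/
theorem stmt0 {d m : ℕ}
    (G : Subgroup (Matrix.orthogonalGroup (Fin d) ℝ)) [Finite G]
    (p : Fin m → MvPolynomial (Fin d) ℝ)
    (hinv : ∀ (i : Fin m) (g : G) (x : Fin d → ℝ),
      eval ((matOf G g).mulVec x) (p i) = eval x (p i))
    (hgen : ∀ f : MvPolynomial (Fin d) ℝ,
      (∀ (g : G) (x : Fin d → ℝ), eval ((matOf G g).mulVec x) f = eval x f) →
        f ∈ Algebra.adjoin ℝ (Set.range p))
    (π : (Fin d → ℝ) → (Fin m → ℝ))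
    (hπ : ∀ (x : Fin d → ℝ) (i : Fin m), π x i = eval x (p i)) :
    ∀ K : Set (Fin m → ℝ), IsCompact K → IsCompact (π ⁻¹' K) :=
  stmt0_general G p hgen π hπ
end

section
/- For all x, y ∈ ℝ^d, one has π(x) = π(y) if and only if there exists g ∈ G with y = g·x; that is, the fibers of π are exactly the G-orbits. -/
/-!
If `y` is not in the orbit `G · x`, the polynomial `z ↦ ∏_{g ∈ G} ‖z - g x‖²` is `G`-invariant
(the orthogonal action permutes the factors) and separates the two points: it vanishes at `x` but
not at `y`. Being invariant, it lies in the algebra generated by the `pᵢ`, on which evaluation at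
`x` and at `y` agree as soon as `π x = π y`.
-/

open MvPolynomial Matrix

namespace Matrix

variable {n : Type*} [Fintype n] [DecidableEq n]

theorem mulVec_dotProduct_mulVec_of_mem_orthogonalGroup {A : Matrix n n ℝ}
    (hA : A ∈ orthogonalGroup n ℝ) (v w : n → ℝ) : A *ᵥ v ⬝ᵥ A *ᵥ w = v ⬝ᵥ w := by
  rw [dotProduct_mulVec, ← vecMul_transpose, vecMul_vecMul, (mem_orthogonalGroup_iff' n ℝ).mp hA,
    vecMul_one]

end Matrix

namespace MvPolynomial

variable {σ R : Type*} [CommSemiring R]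

theorem eval_eq_eval_of_mem_adjoin {s : Set (MvPolynomial σ R)} {x y : σ → R}
    (hs : ∀ q ∈ s, eval x q = eval y q) {f : MvPolynomial σ R} (hf : f ∈ Algebra.adjoin R s) :
    eval x f = eval y f :=
  AlgHom.adjoin_le_equalizer (aeval x) (aeval y) hs hf

end MvPolynomial

section OrbitPolynomial

variable {n : Type*} [Fintype n]

noncomputable def sqDistPoly (v : n → ℝ) : MvPolynomial n ℝ :=
  ∑ i, (X i - C (v i)) ^ 2

theorem eval_sqDistPoly (v z : n → ℝ) : eval z (sqDistPoly v) = (z - v) ⬝ᵥ (z - v) := by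
  simp [sqDistPoly, dotProduct, sq]

variable [DecidableEq n] (G : Subgroup (orthogonalGroup n ℝ)) [Fintype G]

noncomputable def orbitPoly (x : n → ℝ) : MvPolynomial n ℝ :=
  ∏ g : G, sqDistPoly (((g : orthogonalGroup n ℝ) : Matrix n n ℝ) *ᵥ x)

theorem eval_orbitPoly_eq_zero_iff (x z : n → ℝ) :
    eval z (orbitPoly G x) = 0 ↔ ∃ g : G, z = ((g : orthogonalGroup n ℝ) : Matrix n n ℝ) *ᵥ x := by
  simp only [orbitPoly, map_prod, eval_sqDistPoly, Finset.prod_eq_zero_iff, Finset.mem_univ,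
    true_and, dotProduct_self_eq_zero, sub_eq_zero]

theorem eval_orbitPoly_mulVec (x z : n → ℝ) (h : G) :
    eval (((h : orthogonalGroup n ℝ) : Matrix n n ℝ) *ᵥ z) (orbitPoly G x) =
      eval z (orbitPoly G x) := by
  simp only [orbitPoly, map_prod, eval_sqDistPoly]
  refine (Fintype.prod_equiv (Equiv.mulLeft h) _ _ fun g => ?_).symm
  rw [Equiv.coe_mulLeft, Subgroup.coe_mul, UnitaryGroup.mul_val, ← mulVec_mulVec, ← mulVec_sub,
    mulVec_dotProduct_mulVec_of_mem_orthogonalGroup (h : orthogonalGroup n ℝ).2]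

end OrbitPolynomial

/-- The fibers of the geometric quotient map `π = (p₁, …, p_m) : ℝ^d → ℝ^m` are exactly the
`G`-orbits: `π x = π y` if and only if `y = g · x` for some `g ∈ G`. -/
theorem stmt1 {d m : ℕ}
    (G : Subgroup (Matrix.orthogonalGroup (Fin d) ℝ)) [Finite G]
    (p : Fin m → MvPolynomial (Fin d) ℝ)
    (hinv : ∀ (i : Fin m) (g : G) (x : Fin d → ℝ),
      eval ((matOf G g).mulVec x) (p i) = eval x (p i))
    (hgen : ∀ f : MvPolynomial (Fin d) ℝ,
      (∀ (g : G) (x : Fin d → ℝ), eval ((matOf G g).mulVec x) f = eval x f) →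
        f ∈ Algebra.adjoin ℝ (Set.range p))
    (π : (Fin d → ℝ) → (Fin m → ℝ))
    (hπ : ∀ (x : Fin d → ℝ) (i : Fin m), π x i = eval x (p i)) :
    ∀ x y : Fin d → ℝ, π x = π y ↔ ∃ g : G, y = (matOf G g).mulVec x := by
  have := Fintype.ofFinite G
  intro x y
  constructor
  · intro hxy
    have hp : ∀ q ∈ Set.range p, eval x q = eval y q := by
      rintro _ ⟨i, rfl⟩
      rw [← hπ, ← hπ, hxy]
    have hq := eval_eq_eval_of_mem_adjoin hp (hgen _ fun g z => eval_orbitPoly_mulVec G x z g)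
    refine (eval_orbitPoly_eq_zero_iff G x y).mp ?_
    rw [← hq, eval_orbitPoly_eq_zero_iff]
    exact ⟨1, (one_mulVec x).symm⟩
  · rintro ⟨g, rfl⟩
    funext i
    rw [hπ, hπ, hinv]
end

section
/- Let V ⊆ ℝ^d be a real algebraic set (the zero locus of a set of polynomials), let G be a finite group with identity e, and for each g ∈ G let α_g : ℝ^d → ℝ^d be a polynomial map such that α_g(V) ⊆ V, α_e = id on V, and α_g ∘ α_h = α_{gh} on V (so G acts on V). Define φ : V → (G → ℝ^d) by φ(x)(g) = α_{g⁻¹}(x), and let G act on G → ℝ^d by the linear permutation action (h • y)(g) = y(h⁻¹g). Then: (i) φ is injective, with inverse on its image given by the linear map y ↦ y(e); (ii) φ is equivariant: φ(α_h(x)) = h • φ(x) for all h ∈ G, x ∈ V; (iii) the image φ(V) equals the set {y : G → ℝ^d | y(e) ∈ V and y(g) = α_{g⁻¹}(y(e)) for all g ∈ G}, which is a real algebraic subset of (ℝ^d)^G; hence V is equivariantly polynomially isomorphic to a real algebraic set globally stabilized by a linear action of G given by permutation of the factors. -/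
open MvPolynomial

/-! Evaluating the action at a point along the inverted group elements gives a map whose value
at the identity is the point itself, so it is injective with the linear left inverse `y ↦ y 1`,
and the composition law makes it intertwine `α` with the permutation action. Its image is cut out
by the equations of `V` in the coordinates of the factor `1` together with the graph equations
`y g = α g⁻¹ (y 1)`, which are polynomial because every `α g` is. -/

section OrbitEmbedding

variable {G X : Type*} [Group G] {α : G → X → X} {V : Set X}

def orbitEmbedding (α : G → X → X) (x : X) : G → X := fun g => α g⁻¹ x

theorem orbitEmbedding_apply_one (hid : ∀ x ∈ V, α 1 x = x) {x : X} (hx : x ∈ V) :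
    orbitEmbedding α x 1 = x := by
  rw [orbitEmbedding, inv_one, hid x hx]

theorem injOn_orbitEmbedding (hid : ∀ x ∈ V, α 1 x = x) : Set.InjOn (orbitEmbedding α) V :=
  Set.LeftInvOn.injOn (f₁' := fun y => y 1) fun _ hx => orbitEmbedding_apply_one hid hx

theorem orbitEmbedding_apply_action (hcomp : ∀ (g h : G), ∀ x ∈ V, α g (α h x) = α (g * h) x)
    (h : G) {x : X} (hx : x ∈ V) (g : G) :
    orbitEmbedding α (α h x) g = orbitEmbedding α x (h⁻¹ * g) := by
  rw [orbitEmbedding, orbitEmbedding, hcomp g⁻¹ h x hx, mul_inv_rev, inv_inv]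

theorem image_orbitEmbedding (hid : ∀ x ∈ V, α 1 x = x) :
    orbitEmbedding α '' V = {y : G → X | y 1 ∈ V ∧ ∀ g : G, y g = α g⁻¹ (y 1)} := by
  ext y
  constructor
  · rintro ⟨x, hx, rfl⟩
    have hx₁ := orbitEmbedding_apply_one hid hx
    refine ⟨?_, fun g => ?_⟩ <;> rw [hx₁]
    exacts [hx, rfl]
  · rintro ⟨hy₁, hy⟩
    exact ⟨y 1, hy₁, funext fun g => (hy g).symm⟩

end OrbitEmbedding

section GraphEquations

variable {R σ ι : Type*} [CommRing R]

def graphEquations (S : Set (MvPolynomial σ R)) (i₀ : ι) (a : ι → σ → MvPolynomial σ R) :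
    Set (MvPolynomial (ι × σ) R) :=
  rename (Prod.mk i₀) '' S ∪ Set.range fun p : ι × σ => X p - rename (Prod.mk i₀) (a p.1 p.2)

theorem eval_rename_prodMk (y : ι → σ → R) (i₀ : ι) (f : MvPolynomial σ R) :
    eval (fun p : ι × σ => y p.1 p.2) (rename (Prod.mk i₀) f) = eval (y i₀) f := by
  rw [eval_rename]
  rfl

theorem zeroLocus_graphEquations (S : Set (MvPolynomial σ R)) (i₀ : ι)
    (a : ι → σ → MvPolynomial σ R) :
    {y : ι → σ → R | ∀ f ∈ graphEquations S i₀ a, eval (fun p : ι × σ => y p.1 p.2) f = 0} =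
      {y | (∀ f ∈ S, eval (y i₀) f = 0) ∧ ∀ i k, y i k = eval (y i₀) (a i k)} := by
  ext y
  simp only [graphEquations, Set.mem_ofPred_eq, Set.mem_union, or_imp, forall_and,
    Set.forall_mem_image, Set.forall_mem_range, Prod.forall, map_sub, eval_X, eval_rename_prodMk,
    sub_eq_zero]

end GraphEquations

theorem stmt6_general {d : ℕ} {G : Type*} [Group G]
    (S : Set (MvPolynomial (Fin d) ℝ)) (V : Set (Fin d → ℝ))
    (hV : V = {x | ∀ f ∈ S, eval x f = 0})
    (a : G → Fin d → MvPolynomial (Fin d) ℝ)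
    (α : G → (Fin d → ℝ) → (Fin d → ℝ))
    (hα : ∀ (g : G) (x : Fin d → ℝ) (i : Fin d), α g x i = eval x (a g i))
    (hid : ∀ x ∈ V, α 1 x = x)
    (hcomp : ∀ (g h : G), ∀ x ∈ V, α g (α h x) = α (g * h) x)
    (φ : (Fin d → ℝ) → (G → Fin d → ℝ))
    (hφ : ∀ (x : Fin d → ℝ) (g : G), φ x g = α g⁻¹ x) :
    Set.InjOn φ V ∧
    (∀ x ∈ V, φ x 1 = x) ∧
    (∀ (h : G), ∀ x ∈ V, ∀ g : G, φ (α h x) g = φ x (h⁻¹ * g)) ∧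
    φ '' V = {y : G → Fin d → ℝ | y 1 ∈ V ∧ ∀ g : G, y g = α g⁻¹ (y 1)} ∧
    (∃ T : Set (MvPolynomial (G × Fin d) ℝ),
      {y : G → Fin d → ℝ | y 1 ∈ V ∧ ∀ g : G, y g = α g⁻¹ (y 1)} =
        {y : G → Fin d → ℝ | ∀ f ∈ T, eval (fun pr : G × Fin d => y pr.1 pr.2) f = 0}) := by
  obtain rfl : φ = orbitEmbedding α := funext fun x => funext (hφ x)
  refine ⟨injOn_orbitEmbedding hid, fun _ => orbitEmbedding_apply_one hid,
    fun h _ => orbitEmbedding_apply_action hcomp h, image_orbitEmbedding hid,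
    graphEquations S 1 (fun g => a g⁻¹), ?_⟩
  rw [zeroLocus_graphEquations, hV]
  ext y
  simp only [Set.mem_ofPred_eq, funext_iff, hα]

/-- Let `V ⊆ ℝ^d` be a real algebraic set on which a finite group `G` acts by polynomial
maps `α_g`. Define `φ : V → (ℝ^d)^G` by `φ(x)(g) = α_{g⁻¹}(x)` and let `G` act on
`(ℝ^d)^G = (G → ℝ^d)` by permutation `(h • y)(g) = y(h⁻¹ g)`. Then (i) `φ` is injective on
`V` with inverse `y ↦ y(e)` on its image; (ii) `φ` is equivariant; (iii) the image `φ(V)`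
is the set `{y | y(e) ∈ V ∧ ∀ g, y(g) = α_{g⁻¹}(y(e))}`, which is a real algebraic subset
of `(ℝ^d)^G`. -/
theorem stmt6 {d : ℕ} {G : Type*} [Group G] [Finite G]
    (S : Set (MvPolynomial (Fin d) ℝ)) (V : Set (Fin d → ℝ))
    (hV : V = {x | ∀ f ∈ S, eval x f = 0})
    (a : G → Fin d → MvPolynomial (Fin d) ℝ)
    (α : G → (Fin d → ℝ) → (Fin d → ℝ))
    (hα : ∀ (g : G) (x : Fin d → ℝ) (i : Fin d), α g x i = eval x (a g i))
    (hstab : ∀ (g : G), ∀ x ∈ V, α g x ∈ V)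
    (hid : ∀ x ∈ V, α 1 x = x)
    (hcomp : ∀ (g h : G), ∀ x ∈ V, α g (α h x) = α (g * h) x)
    (φ : (Fin d → ℝ) → (G → Fin d → ℝ))
    (hφ : ∀ (x : Fin d → ℝ) (g : G), φ x g = α g⁻¹ x) :
    Set.InjOn φ V ∧
    (∀ x ∈ V, φ x 1 = x) ∧
    (∀ (h : G), ∀ x ∈ V, ∀ g : G, φ (α h x) g = φ x (h⁻¹ * g)) ∧
    φ '' V = {y : G → Fin d → ℝ | y 1 ∈ V ∧ ∀ g : G, y g = α g⁻¹ (y 1)} ∧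
    (∃ T : Set (MvPolynomial (G × Fin d) ℝ),
      {y : G → Fin d → ℝ | y 1 ∈ V ∧ ∀ g : G, y g = α g⁻¹ (y 1)} =
        {y : G → Fin d → ℝ | ∀ f ∈ T, eval (fun pr : G × Fin d => y pr.1 pr.2) f = 0}) :=
  stmt6_general S V hV a α hα hid hcomp φ hφ
end

section
/- Let G be a finite group acting by ring automorphisms on a commutative ring R, and let R^G := {r ∈ R | g·r = r for all g ∈ G} be the fixed subring. Then the Krull dimension of R equals the Krull dimension of R^G. -/
/-!
`R` is integral over `R^G`: each `r` is a root of the monic polynomial `∏ g, (X - g • r)`, whose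
coefficients are `G`-invariant. For an integral extension, incomparability makes contraction of
primes strictly monotone, and lying over together with going up lifts every chain of primes of the
base; so the two Krull dimensions agree.
-/

/-- The subring of `G`-fixed elements of a commutative ring on which a group `G` acts
by ring automorphisms. -/
def fixedSubring (G R : Type*) [Group G] [CommRing R] [MulSemiringAction G R] :
    Subring R where
  carrier := {r | ∀ g : G, g • r = r}
  mul_mem' := fun {a b} ha hb g => by rw [smul_mul', ha g, hb g]
  add_mem' := fun {a b} ha hb g => by rw [smul_add, ha g, hb g]
  one_mem' := fun g => smul_one g
  zero_mem' := fun g => smul_zero g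
  neg_mem' := fun {a} ha g => by rw [smul_neg, ha g]

section IsIntegral

variable {R S : Type*} [CommRing R] [CommRing S] [Algebra R S] [Algebra.IsIntegral R S]

theorem ringKrullDim_le_of_isIntegral : ringKrullDim S ≤ ringKrullDim R :=
  Order.krullDim_le_of_strictMono (PrimeSpectrum.comap (algebraMap R S))
    fun _ _ h ↦ Ideal.IsIntegral.comap_lt_comap (R := R) h

theorem ringKrullDim_le_of_isIntegral_of_injective (hinj : Function.Injective (algebraMap R S)) :
    ringKrullDim R ≤ ringKrullDim S := by
  refine iSup_le fun l ↦ ?_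
  obtain ⟨P, -, hP, hPl⟩ := Ideal.exists_ideal_over_prime_of_isIntegral l.head.asIdeal ⊥
    (by rw [Ideal.comap_bot_of_injective _ hinj]; exact bot_le)
  have : P.LiesOver l.head.asIdeal := ⟨hPl.symm⟩
  obtain ⟨L, hL, -⟩ := Ideal.exists_ltSeries_of_hasGoingUp l P
  exact hL ▸ Order.LTSeries.length_le_krullDim L

theorem ringKrullDim_eq_of_isIntegral_of_injective (hinj : Function.Injective (algebraMap R S)) :
    ringKrullDim S = ringKrullDim R :=
  ringKrullDim_le_of_isIntegral.antisymm (ringKrullDim_le_of_isIntegral_of_injective hinj)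

end IsIntegral

instance fixedSubring.isInvariant (G R : Type*) [Group G] [CommRing R] [MulSemiringAction G R] :
    Algebra.IsInvariant (fixedSubring G R) R G :=
  ⟨fun r hr ↦ ⟨⟨r, hr⟩, rfl⟩⟩

/-- If a finite group `G` acts on a commutative ring `R` by ring automorphisms, the Krull
dimension of `R` equals the Krull dimension of the fixed subring `R^G`. -/
theorem stmt12 (G R : Type*) [Group G] [Finite G] [CommRing R] [MulSemiringAction G R] :
    ringKrullDim R = ringKrullDim ↥(fixedSubring G R) :=
  have := Algebra.IsInvariant.isIntegral (fixedSubring G R) R G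
  ringKrullDim_eq_of_isIntegral_of_injective Subtype.val_injective
end

section
/- Let A be a commutative ring that is a finitely generated ℝ-algebra, let G be a finite group acting on A by ℝ-algebra automorphisms, and let B := A^G be the fixed subalgebra. Let m be a maximal ideal of A with residue field ℝ (the composition ℝ → A → A/m is an isomorphism) such that g·m ≠ m for every g ∈ G with g ≠ e, and set p := m ∩ B. Then the inclusion B ⊆ A induces an isomorphism of ℝ-vector spaces p/p² → m/m² between the Zariski cotangent spaces. (This is the statement that the geometric quotient map induces an isomorphism m_{π(x)}/m_{π(x)}² → m_x/m_x² at a nonsingular point x with trivial stabilizer.) -/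
/-!
Write `p = m ∩ B`. The conjugates `g • m` are pairwise distinct maximal ideals, so by the Chinese
remainder theorem there is `e ≡ 1 mod m²` with `e ∈ (g • m)²` for all `g ≠ 1`; then `∑ g • (e x)`
is an invariant element congruent to `x` modulo `m²`, which gives surjectivity. Applied to products,
the same construction shows that every element of `m ^ k` is congruent modulo `m ^ (k + 1)` to an
element of `p ^ k`, so an invariant `b ∈ m²` differs from an element of `p²` by an invariant element
of `m ^ K`, for every `K`. An invariant element of `m ^ K` lies in `⋂ (g • m) ^ K = (∏ g • m) ^ K`.
The `g • m` are exactly the primes over `p`, so since `A` is noetherian this power lies in `p² A`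
for large `K`, and averaging over `G` shows `p² A ∩ B = p²`.
-/

def fixedSubalgebra (G A : Type*) [Group G] [CommRing A] [Algebra ℝ A]
    [MulSemiringAction G A] [SMulCommClass G ℝ A] : Subalgebra ℝ A where
  carrier := {a | ∀ g : G, g • a = a}
  mul_mem' := fun {a b} ha hb g => by rw [smul_mul', ha g, hb g]
  add_mem' := fun {a b} ha hb g => by rw [smul_add, ha g, hb g]
  algebraMap_mem' := fun r g => by
    rw [Algebra.algebraMap_eq_smul_one, smul_comm, smul_one]

open scoped Pointwise

theorem Finset.smul_sum_perm {G M : Type*} [Group G] [Fintype G] [AddCommMonoid M]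
    [DistribMulAction G M] (g : G) (a : M) : g • ∑ h : G, h • a = ∑ h : G, h • a := by
  simp only [Finset.smul_sum, smul_smul]
  exact Finset.sum_bijective (g * ·) (Group.mulLeft_bijective g) (by simp) (fun _ _ ↦ rfl)

namespace Ideal

variable {G A : Type*} [Group G] [CommRing A] [MulSemiringAction G A] {m : Ideal A}

theorem coe_pointwise_smul (g : G) (I : Ideal A) :
    ((g • I : Ideal A) : Set A) = g • (I : Set A) :=
  Set.ext fun _ ↦ mem_pointwise_smul_iff_inv_smul_mem.trans Set.mem_smul_set_iff_inv_smul_mem.symm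

instance IsMaximal.smul [m.IsMaximal] (g : G) : (g • m).IsMaximal := by
  rw [pointwise_smul_eq_comap]
  exact comap_isMaximal_of_surjective _ (MulSemiringAction.toRingAut G A g).symm.surjective

theorem pairwise_isCoprime_smul [m.IsMaximal] (hstab : MulAction.stabilizer G m = ⊥) :
    Pairwise fun g h : G ↦ IsCoprime (g • m) (h • m) := by
  intro g h hgh
  refine isCoprime_of_isMaximal fun heq ↦ hgh ?_
  have : h⁻¹ * g ∈ MulAction.stabilizer G m := by
    rw [MulAction.mem_stabilizer_iff, mul_smul, heq, inv_smul_smul]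
  rwa [hstab, Subgroup.mem_bot, inv_mul_eq_one, eq_comm] at this

theorem exists_sub_one_mem_sq_and_mem_smul_sq [Finite G] [m.IsMaximal]
    (hstab : MulAction.stabilizer G m = ⊥) :
    ∃ e : A, e - 1 ∈ m ^ 2 ∧ ∀ g : G, g ≠ 1 → e ∈ (g • m) ^ 2 := by
  classical
  obtain ⟨e, he⟩ := exists_forall_sub_mem_ideal (I := fun g : G ↦ (g • m) ^ 2)
    (fun _ _ hgh ↦ (pairwise_isCoprime_smul hstab hgh).pow) (fun g ↦ if g = 1 then 1 else 0)
  exact ⟨e, by simpa using he 1, fun g hg ↦ by simpa [hg] using he g⟩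

theorem exists_fixed_sub_mem_sq [Fintype G] [m.IsMaximal] (hstab : MulAction.stabilizer G m = ⊥)
    (x : A) : ∃ c : A, (∀ g : G, g • c = c) ∧ c - x ∈ m ^ 2 := by
  classical
  obtain ⟨e, he1, he⟩ := exists_sub_one_mem_sq_and_mem_smul_sq hstab
  refine ⟨∑ g : G, g • (e * x), fun g ↦ Finset.smul_sum_perm g _, ?_⟩
  rw [← Finset.add_sum_erase _ _ (Finset.mem_univ 1), one_smul, add_sub_right_comm,
    ← sub_one_mul]
  refine add_mem (mul_mem_right x _ he1) (sum_mem _ fun g hg ↦ ?_)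
  have hge : g • e ∈ m ^ 2 := by
    rw [← mem_inv_pointwise_smul_iff, smul_pow']
    exact he g⁻¹ (inv_ne_one.2 (Finset.ne_of_mem_erase hg))
  rw [smul_mul']
  exact mul_mem_right _ _ hge

theorem mem_prod_smul_pow_of_mem_pow [Fintype G] [m.IsMaximal]
    (hstab : MulAction.stabilizer G m = ⊥) {k : ℕ} {a : A} (hfix : ∀ g : G, g • a = a)
    (ha : a ∈ m ^ k) : a ∈ (∏ g : G, g • m) ^ k := by
  rw [← Finset.prod_pow, prod_eq_iInf_of_pairwise_isCoprime
    fun g _ h _ hgh ↦ (pairwise_isCoprime_smul hstab hgh).pow]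
  simp only [mem_iInf]
  intro g _
  rw [← hfix g, ← smul_pow']
  exact smul_mem_pointwise_smul g a _ ha

variable {B : Type*} [CommRing B] [Algebra B A] [Algebra.IsInvariant B A G]

theorem exists_sub_mem_sq [Fintype G] [m.IsMaximal] (hstab : MulAction.stabilizer G m = ⊥)
    {a : A} (ha : a ∈ m) : ∃ b ∈ m.under B, a - algebraMap B A b ∈ m ^ 2 := by
  obtain ⟨c, hfix, hc⟩ := exists_fixed_sub_mem_sq hstab a
  obtain ⟨b, rfl⟩ := Algebra.IsInvariant.isInvariant (A := B) c hfix
  refine ⟨b, ?_, by simpa using neg_mem hc⟩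
  simpa using add_mem (pow_le_self two_ne_zero hc) ha

theorem exists_sub_mem_pow_succ [Fintype G] [m.IsMaximal] (hstab : MulAction.stabilizer G m = ⊥)
    {k : ℕ} (hk : k ≠ 0) {a : A} (ha : a ∈ m ^ k) :
    ∃ b ∈ m.under B ^ k, a - algebraMap B A b ∈ m ^ (k + 1) := by
  induction k, Nat.one_le_iff_ne_zero.2 hk using Nat.le_induction generalizing a with
  | base => simpa using exists_sub_mem_sq hstab (by simpa using ha)
  | succ k hk ih =>
    rw [pow_succ] at ha
    refine Submodule.mul_induction_on ha (fun x hx y hy ↦ ?_) ?_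
    · obtain ⟨b, hb, hxb⟩ := ih (by omega) hx
      obtain ⟨c, hc, hyc⟩ := exists_sub_mem_sq (B := B) hstab hy
      refine ⟨b * c, by rw [pow_succ]; exact mul_mem_mul hb hc, ?_⟩
      have hb' : algebraMap B A b ∈ m ^ k := le_comap_pow _ k hb
      rw [map_mul, show x * y - algebraMap B A b * algebraMap B A c =
        (x - algebraMap B A b) * y + algebraMap B A b * (y - algebraMap B A c) by ring]
      refine add_mem ?_ ?_
      · simpa [← pow_succ] using mul_mem_mul hxb hy
      · simpa [← pow_add] using mul_mem_mul hb' hyc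
    · rintro x y ⟨b, hb, hxb⟩ ⟨c, hc, hyc⟩
      refine ⟨b + c, add_mem hb hc, ?_⟩
      simpa [add_sub_add_comm] using add_mem hxb hyc

theorem exists_sub_mem_pow_add [Fintype G] [m.IsMaximal] (hstab : MulAction.stabilizer G m = ⊥)
    {k : ℕ} (hk : k ≠ 0) {a : A} (ha : a ∈ m ^ k) (n : ℕ) :
    ∃ b ∈ m.under B ^ k, a - algebraMap B A b ∈ m ^ (k + n) := by
  induction n with
  | zero => exact ⟨0, zero_mem _, by simpa using ha⟩
  | succ n ih =>
    obtain ⟨b, hb, hab⟩ := ih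
    obtain ⟨c, hc, habc⟩ := exists_sub_mem_pow_succ (B := B) hstab (by omega) hab
    refine ⟨b + c, add_mem hb (pow_le_pow_right (by omega) hc), ?_⟩
    simpa [sub_sub, ← add_assoc] using habc

theorem comap_map_eq_self_of_isInvariant [Fintype G] [SMulCommClass G B A]
    (hinj : Function.Injective (algebraMap B A)) (hcard : IsUnit (Fintype.card G : B))
    (I : Ideal B) : (I.map (algebraMap B A)).comap (algebraMap B A) = I := by
  refine le_antisymm (fun b hb ↦ ?_) le_comap_map
  have hsum : ∀ a ∈ I.map (algebraMap B A), ∃ c ∈ I, ∑ g : G, g • a = algebraMap B A c := by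
    intro a ha
    rw [← Submodule.restrictScalars_mem B, ← smul_top_eq_map] at ha
    refine Submodule.smul_induction_on ha (fun r hr x _ ↦ ?_) ?_
    · obtain ⟨c, hc⟩ := Algebra.IsInvariant.isInvariant (A := B) _
        (Finset.smul_sum_perm (G := G) · x)
      refine ⟨r * c, mul_mem_right c I hr, ?_⟩
      simp_rw [smul_comm _ r, ← Finset.smul_sum, ← hc, Algebra.smul_def, map_mul]
    · rintro x y ⟨c, hc, hxc⟩ ⟨d, hd, hyd⟩
      refine ⟨c + d, add_mem hc hd, ?_⟩
      simp only [smul_add, Finset.sum_add_distrib, hxc, hyd, map_add]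
  obtain ⟨c, hc, hbc⟩ := hsum _ hb
  have : (Fintype.card G : B) * b = c := hinj (by simp [← hbc, smul_algebraMap])
  exact (unit_mul_mem_iff_mem I hcard).1 (this ▸ hc)

theorem prod_smul_le_radical_map_pow_under [Fintype G] [SMulCommClass G B A] [m.IsMaximal]
    (n : ℕ) : ∏ g : G, g • m ≤ ((m.under B ^ n).map (algebraMap B A)).radical := by
  have := Algebra.IsInvariant.isIntegral B A G
  rw [radical_eq_sInf]
  refine le_sInf fun q ⟨hle, hq⟩ ↦ ?_
  have hp : m.under B ≤ q.under B := by
    rw [Ideal.map_pow] at hle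
    exact map_le_iff_le_comap.1 (hq.le_of_pow_le hle)
  obtain ⟨g, rfl⟩ := Algebra.IsInvariant.exists_smul_of_under_eq B A G m q
    ((IsMaximal.under B m).eq_of_le (IsPrime.under B q).ne_top hp)
  exact prod_le_inf.trans (Finset.inf_le (Finset.mem_univ g))

theorem exists_pow_forall_mem_under_pow [Fintype G] [SMulCommClass G B A] [IsNoetherianRing A]
    [m.IsMaximal] (hstab : MulAction.stabilizer G m = ⊥)
    (hinj : Function.Injective (algebraMap B A)) (hcard : IsUnit (Fintype.card G : B)) (n : ℕ) :
    ∃ K, ∀ b : B, algebraMap B A b ∈ m ^ K → b ∈ m.under B ^ n := by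
  obtain ⟨K, hK⟩ := exists_pow_le_of_le_radical_of_fg
    (prod_smul_le_radical_map_pow_under (B := B) n) (IsNoetherian.noetherian (∏ g : G, g • m))
  refine ⟨K, fun b hb ↦ (comap_map_eq_self_of_isInvariant hinj hcard _).le (hK ?_)⟩
  exact mem_prod_smul_pow_of_mem_pow hstab (fun g ↦ smul_algebraMap g b) hb

theorem mem_under_pow_of_algebraMap_mem_pow [Fintype G] [SMulCommClass G B A]
    [IsNoetherianRing A] [m.IsMaximal] (hstab : MulAction.stabilizer G m = ⊥)
    (hinj : Function.Injective (algebraMap B A)) (hcard : IsUnit (Fintype.card G : B))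
    {k : ℕ} (hk : k ≠ 0) {b : B} (hb : algebraMap B A b ∈ m ^ k) : b ∈ m.under B ^ k := by
  obtain ⟨K, hK⟩ := exists_pow_forall_mem_under_pow hstab hinj hcard k
  obtain ⟨c, hc, hbc⟩ := exists_sub_mem_pow_add (B := B) hstab hk hb K
  have hbc' : b - c ∈ m.under B ^ k :=
    hK _ (by rw [map_sub]; exact pow_le_pow_right (by omega) hbc)
  simpa using add_mem hbc' hc

theorem bijective_mapCotangent_under {R : Type*} [CommRing R] [Algebra R B] [Algebra R A]
    [IsScalarTower R B A] [Fintype G] [SMulCommClass G B A] [IsNoetherianRing A] [m.IsMaximal]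
    (hstab : MulAction.stabilizer G m = ⊥)
    (hinj : Function.Injective (algebraMap B A)) (hcard : IsUnit (Fintype.card G : B)) :
    Function.Bijective
      (mapCotangent (m.under B) m (IsScalarTower.toAlgHom R B A) fun _ ↦ id) := by
  constructor
  · refine (injective_iff_map_eq_zero _).2 fun x hx ↦ ?_
    obtain ⟨b, rfl⟩ := toCotangent_surjective _ x
    exact (toCotangent_eq_zero _ b).2 (mem_under_pow_of_algebraMap_mem_pow hstab hinj hcard
      two_ne_zero ((toCotangent_eq_zero m _).1 hx))
  · intro z
    obtain ⟨a, rfl⟩ := toCotangent_surjective m z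
    obtain ⟨b, hb, hab⟩ := exists_sub_mem_sq (B := B) hstab a.2
    refine ⟨toCotangent _ ⟨b, hb⟩, (toCotangent_eq m).2 ?_⟩
    have := neg_mem hab
    rwa [neg_sub] at this

end Ideal

instance {G A : Type*} [Group G] [CommRing A] [Algebra ℝ A] [MulSemiringAction G A]
    [SMulCommClass G ℝ A] : Algebra.IsInvariant (fixedSubalgebra G A) A G :=
  ⟨fun a ha ↦ ⟨⟨a, ha⟩, rfl⟩⟩

instance {G A : Type*} [Group G] [CommRing A] [Algebra ℝ A] [MulSemiringAction G A]
    [SMulCommClass G ℝ A] : SMulCommClass G (fixedSubalgebra G A) A :=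
  ⟨fun g s a ↦ by simp only [Subalgebra.smul_def, smul_eq_mul, smul_mul', s.2 g]⟩

theorem stmt14_general {G A : Type*} [Group G] [Finite G] [CommRing A] [Algebra ℝ A]
    [MulSemiringAction G A] [SMulCommClass G ℝ A]
    (hfg : Algebra.FiniteType ℝ A)
    (m : Ideal A) [hm : m.IsMaximal]
    (hfree : ∀ g : G, g ≠ 1 → (fun a => g • a) '' (m : Set A) ≠ (m : Set A)) :
    Function.Bijective
      ⇑(Ideal.mapCotangent (Ideal.comap (fixedSubalgebra G A).val m) m
        (fixedSubalgebra G A).val le_rfl) := by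
  cases nonempty_fintype G
  have := Algebra.FiniteType.isNoetherianRing ℝ A
  have hstab : MulAction.stabilizer G m = ⊥ := (Subgroup.eq_bot_iff_forall _).2 fun g hg ↦
    by_contra fun hg1 ↦ hfree g hg1 (by rw [Set.image_smul, ← Ideal.coe_pointwise_smul, hg])
  have hcard : IsUnit (Fintype.card G : fixedSubalgebra G A) := by
    simpa using (IsUnit.mk0 (Fintype.card G : ℝ) (by positivity)).map
      (algebraMap ℝ (fixedSubalgebra G A))
  exact Ideal.bijective_mapCotangent_under hstab Subtype.val_injective hcard

/-- Let `A` be a finitely generated commutative `ℝ`-algebra with an action of a finite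
group `G` by `ℝ`-algebra automorphisms, `B = A^G`, and `m` a maximal ideal of `A` with
residue field `ℝ` and trivial stabilizer; let `p = m ∩ B`. Then the inclusion `B ⊆ A`
induces an isomorphism of `ℝ`-vector spaces `p/p² → m/m²` of Zariski cotangent spaces. -/
theorem stmt14 {G A : Type*} [Group G] [Finite G] [CommRing A] [Algebra ℝ A]
    [MulSemiringAction G A] [SMulCommClass G ℝ A]
    (hfg : Algebra.FiniteType ℝ A)
    (m : Ideal A) [hm : m.IsMaximal]
    (hres : Function.Bijective (fun r : ℝ => Ideal.Quotient.mk m (algebraMap ℝ A r)))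
    (hfree : ∀ g : G, g ≠ 1 → (fun a => g • a) '' (m : Set A) ≠ (m : Set A)) :
    Function.Bijective
      ⇑(Ideal.mapCotangent (Ideal.comap (fixedSubalgebra G A).val m) m
        (fixedSubalgebra G A).val le_rfl) :=
  stmt14_general hfg m (hm := hm) hfree
end
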